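/- For fixed 0 < k < 1 and 0 < u < K(k), the Jacobi elliptic function dn(u,k) is strictly decreasing as a function of the modulus k; equivalently, the quantity g(u) = E(u) − k'²·u − sn(u)·dn(u)/cn(u) is strictly negative for 0 < u < K(k), where E(u) = ∫₀^u dn²(v) dv. -/

import Mathlib

open Real intervalIntegral

/-- Complete elliptic integral of the first kind. -/
noncomputable def ellK (k : ℝ) : ℝ :=
  ∫ θ in (0:ℝ)..(π/2), 1 / Real.sqrt (1 - k^2 * (Real.sin θ)^2)

/-- Complete elliptic integral of the second kind. -/
noncomputable def ellE (k : ℝ) : ℝ :=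
  ∫ θ in (0:ℝ)..(π/2), Real.sqrt (1 - k^2 * (Real.sin θ)^2)


/-!
Put `am u = ∫₀ᵘ dn`. The system forces `sn = sin ∘ am`, `cn = cos ∘ am` and
`dn = √(1 - k² sin² am)`, hence `F(am u, k) = u` for the incomplete integral `F`. So for
`0 < u < K(k)` the amplitude lies in `(0, π/2)` and `cn > 0` on `[0, u]`; then `g(0) = 0` and
`g' = -k'² / cn² < 0` give `g(u) < 0`.

Since `K` is continuous, `u < K(m)` persists for `m` near `k`, where
`am(u, m) = arcsin (√(1 - dn²) / m)` is therefore differentiable in `m`. Differentiating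
`F(am(u, m), m) = u` and `dn = √(1 - m² sin² am)` in `m` gives
`∂ₘ dn = -k sn cn (tan am / dn - k ∂ₖF(am, k))`. As a function of `φ = am`, the bracket vanishes
at `0` and has derivative `sec² φ / √(1 - k² sin² φ) > 0`.
-/

open MeasureTheory Set Filter Topology Metric Asymptotics

section MovingEndpoint

variable {f f' : ℝ → ℝ → ℝ} {k ε C : ℝ}

lemma abs_sub_le_of_abs_deriv_le (hderiv : ∀ θ, ∀ m ∈ ball k ε, HasDerivAt (f · θ) (f' m θ) m)
    (hbound : ∀ θ, ∀ m ∈ ball k ε, |f' m θ| ≤ C) {m : ℝ} (hm : m ∈ ball k ε) (θ : ℝ) :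
    |f m θ - f k θ| ≤ C * |m - k| :=
  (convex_ball k ε).norm_image_sub_le_of_norm_hasDerivWithin_le
    (fun x hx => (hderiv θ x hx).hasDerivWithinAt) (fun x hx => hbound θ x hx)
    (mem_ball_self (pos_of_mem_ball hm)) hm

lemma hasDerivAt_integral_sub_of_abs_deriv_le {ψ : ℝ → ℝ} (hε : 0 < ε)
    (hderiv : ∀ θ, ∀ m ∈ ball k ε, HasDerivAt (f · θ) (f' m θ) m)
    (hbound : ∀ θ, ∀ m ∈ ball k ε, |f' m θ| ≤ C) (hψ : ContinuousAt ψ k) :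
    HasDerivAt (fun m => ∫ θ in ψ k..ψ m, (f m θ - f k θ)) 0 k := by
  rw [hasDerivAt_iff_isLittleO]
  simp only [intervalIntegral.integral_same, sub_zero, smul_zero]
  have hbigO : (fun m => ∫ θ in ψ k..ψ m, (f m θ - f k θ)) =O[𝓝 k]
      fun m => (m - k) * (ψ m - ψ k) := by
    refine IsBigO.of_bound C ?_
    filter_upwards [ball_mem_nhds k hε] with m hm
    refine (intervalIntegral.norm_integral_le_of_norm_le_const fun θ _ =>
      abs_sub_le_of_abs_deriv_le hderiv hbound hm θ).trans_eq ?_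
    simp only [norm_mul, Real.norm_eq_abs]
    ring
  have hψ' : (fun m => ψ m - ψ k) =o[𝓝 k] fun _ => (1 : ℝ) :=
    (isLittleO_one_iff ℝ).2 (by simpa using hψ.sub_const (ψ k))
  simpa using hbigO.trans_isLittleO ((isBigO_refl (fun m => m - k) _).mul_isLittleO hψ')

theorem hasDerivAt_integral_of_abs_deriv_le_of_upper_limit {ψ : ℝ → ℝ} {a ψ' : ℝ}
    (hε : 0 < ε) (hf : ∀ m ∈ ball k ε, Continuous (f m)) (hf' : Continuous (f' k))
    (hderiv : ∀ θ, ∀ m ∈ ball k ε, HasDerivAt (f · θ) (f' m θ) m)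
    (hbound : ∀ θ, ∀ m ∈ ball k ε, |f' m θ| ≤ C) (hψ : HasDerivAt ψ ψ' k) :
    HasDerivAt (fun m => ∫ θ in a..ψ m, f m θ) ((∫ θ in a..ψ k, f' k θ) + f k (ψ k) * ψ') k := by
  have hball : ball k ε ∈ 𝓝 k := ball_mem_nhds k hε
  have hfk : Continuous (f k) := hf k (mem_ball_self hε)
  have hfixed : HasDerivAt (fun m => ∫ θ in a..ψ k, f m θ) (∫ θ in a..ψ k, f' k θ) k :=
    (intervalIntegral.hasDerivAt_integral_of_dominated_loc_of_deriv_le hball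
      (eventually_of_mem hball fun m hm => (hf m hm).aestronglyMeasurable.restrict)
      (hfk.intervalIntegrable _ _) hf'.aestronglyMeasurable.restrict
      (ae_of_all _ fun θ _ m hm => hbound θ m hm) intervalIntegrable_const
      (ae_of_all _ fun θ _ m hm => hderiv θ m hm)).2
  have hlimit : HasDerivAt (fun m => ∫ θ in ψ k..ψ m, f k θ) (f k (ψ k) * ψ') k :=
    (hfk.integral_hasStrictDerivAt (ψ k) (ψ k)).hasDerivAt.comp k hψ
  have hrem := hasDerivAt_integral_sub_of_abs_deriv_le hε hderiv hbound hψ.continuousAt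
  refine (((hfixed.add hlimit).add hrem).congr_deriv (add_zero _)).congr_of_eventuallyEq ?_
  filter_upwards [hball] with m hm
  have hfm : ∀ x y, IntervalIntegrable (f m) volume x y := (hf m hm).intervalIntegrable
  simp only [Pi.add_apply]
  rw [intervalIntegral.integral_sub (hfm _ _) (hfk.intervalIntegrable (ψ k) (ψ m)),
    ← intervalIntegral.integral_add_adjacent_intervals (hfm a (ψ k)) (hfm (ψ k) (ψ m))]
  ring

end MovingEndpoint

lemma one_sub_sq_mul_sin_sq_pos {m : ℝ} (hm : m ^ 2 < 1) (θ : ℝ) : 0 < 1 - m ^ 2 * sin θ ^ 2 := by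
  nlinarith [sin_sq_le_one θ, sq_nonneg (sin θ)]

lemma continuous_one_div_sqrt_one_sub_sq_mul_sin_sq {m : ℝ} (hm : m ^ 2 < 1) :
    Continuous fun θ => 1 / √(1 - m ^ 2 * sin θ ^ 2) :=
  continuous_const.div (by fun_prop) fun θ => (sqrt_pos.2 (one_sub_sq_mul_sin_sq_pos hm θ)).ne'

noncomputable def ellF (m φ : ℝ) : ℝ := ∫ θ in (0:ℝ)..φ, 1 / √(1 - m ^ 2 * sin θ ^ 2)

/-- `∂ellF m φ / ∂m`, computed under the integral sign in `hasDerivAt_ellF_comp`. -/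
noncomputable def ellFDerivModulus (m φ : ℝ) : ℝ :=
  ∫ θ in (0:ℝ)..φ, m * sin θ ^ 2 / ((1 - m ^ 2 * sin θ ^ 2) * √(1 - m ^ 2 * sin θ ^ 2))

lemma ellF_zero (m : ℝ) : ellF m 0 = 0 := integral_same

lemma hasDerivAt_ellF {m : ℝ} (hm : m ^ 2 < 1) (φ : ℝ) :
    HasDerivAt (ellF m) (1 / √(1 - m ^ 2 * sin φ ^ 2)) φ :=
  ((continuous_one_div_sqrt_one_sub_sq_mul_sin_sq hm).integral_hasStrictDerivAt 0 φ).hasDerivAt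

lemma strictMono_ellF {m : ℝ} (hm : m ^ 2 < 1) : StrictMono (ellF m) :=
  strictMono_of_deriv_pos fun φ => by
    rw [(hasDerivAt_ellF hm φ).deriv]
    exact one_div_pos.2 (sqrt_pos.2 (one_sub_sq_mul_sin_sq_pos hm φ))

lemma hasDerivAt_one_div_sqrt_one_sub_sq_mul {m a : ℝ} (h : 0 < 1 - m ^ 2 * a) :
    HasDerivAt (fun x => 1 / √(1 - x ^ 2 * a))
      (m * a / ((1 - m ^ 2 * a) * √(1 - m ^ 2 * a))) m := by
  have hw : HasDerivAt (fun x => 1 - x ^ 2 * a) (-(2 * m * a)) m := by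
    simpa using ((hasDerivAt_pow 2 m).mul_const a).const_sub 1
  have hsqrt := sqrt_pos.2 h
  refine ((hasDerivAt_const m 1).div (hw.sqrt h.ne') hsqrt.ne').congr_deriv ?_
  rw [sq_sqrt h.le]
  field_simp
  ring

lemma abs_mul_div_mul_sqrt_le {m a c : ℝ} (hc : 0 < c) (hm : |m| ≤ 1) (ha0 : 0 ≤ a) (ha1 : a ≤ 1)
    (hw : c ≤ 1 - m ^ 2 * a) :
    |m * a / ((1 - m ^ 2 * a) * √(1 - m ^ 2 * a))| ≤ 1 / (c * √c) := by
  rw [abs_div, abs_mul, abs_of_nonneg ha0,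
    abs_of_pos (mul_pos (hc.trans_le hw) (sqrt_pos.2 (hc.trans_le hw)))]
  exact div_le_div₀ zero_le_one (mul_le_one₀ hm ha0 ha1) (by positivity)
    (mul_le_mul hw (sqrt_le_sqrt hw) (sqrt_nonneg _) (hc.trans_le hw).le)

theorem hasDerivAt_ellF_comp {k ψ' : ℝ} {ψ : ℝ → ℝ} (hk2 : k ^ 2 < 1) (hψ : HasDerivAt ψ ψ' k) :
    HasDerivAt (fun m => ellF m (ψ m))
      (ellFDerivModulus k (ψ k) + ψ' / √(1 - k ^ 2 * sin (ψ k) ^ 2)) k := by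
  have hk : |k| < 1 := (sq_lt_one_iff_abs_lt_one k).1 hk2
  set b := (1 + |k|) / 2 with hb_def
  have hb : b < 1 := by linarith
  have hb2 : 0 < 1 - b ^ 2 := by nlinarith [abs_nonneg k]
  have hball : ∀ m ∈ ball k ((1 - |k|) / 2), |m| < b ∧ m ^ 2 < 1 := by
    intro m hm
    rw [mem_ball, Real.dist_eq] at hm
    have : |m| < b := by linarith [abs_sub_abs_le_abs_sub m k]
    exact ⟨this, (sq_lt_one_iff_abs_lt_one m).2 (this.trans hb)⟩
  have hw : ∀ m ∈ ball k ((1 - |k|) / 2), ∀ θ, 1 - b ^ 2 ≤ 1 - m ^ 2 * sin θ ^ 2 := by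
    intro m hm θ
    have := sq_lt_sq.2 (((hball m hm).1).trans_eq (abs_of_pos (by positivity)).symm)
    nlinarith [sin_sq_le_one θ, sq_nonneg (sin θ)]
  have := hasDerivAt_integral_of_abs_deriv_le_of_upper_limit (a := 0)
    (f := fun m θ => 1 / √(1 - m ^ 2 * sin θ ^ 2))
    (f' := fun m θ => m * sin θ ^ 2 / ((1 - m ^ 2 * sin θ ^ 2) * √(1 - m ^ 2 * sin θ ^ 2)))
    (C := 1 / ((1 - b ^ 2) * √(1 - b ^ 2))) (by linarith)
    (fun m hm => continuous_one_div_sqrt_one_sub_sq_mul_sin_sq (hball m hm).2) ?_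
    (fun θ m hm =>
      hasDerivAt_one_div_sqrt_one_sub_sq_mul (one_sub_sq_mul_sin_sq_pos (hball m hm).2 θ))
    (fun θ m hm => abs_mul_div_mul_sqrt_le hb2 ((hball m hm).1.le.trans hb.le)
      (sq_nonneg _) (sin_sq_le_one θ) (hw m hm θ)) hψ
  · exact this.congr_deriv (by rw [ellFDerivModulus]; ring)
  · exact Continuous.div (by fun_prop) (by fun_prop) fun θ =>
      (mul_pos (one_sub_sq_mul_sin_sq_pos hk2 θ) (sqrt_pos.2 (one_sub_sq_mul_sin_sq_pos hk2 θ))).ne'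

lemma hasDerivAt_sqrt_one_sub_sq_mul_sin_sq_comp {k ψ' : ℝ} {ψ : ℝ → ℝ} (hk : k ^ 2 < 1)
    (hψ : HasDerivAt ψ ψ' k) :
    HasDerivAt (fun m => √(1 - m ^ 2 * sin (ψ m) ^ 2))
      (-(k * sin (ψ k) ^ 2 + k ^ 2 * sin (ψ k) * cos (ψ k) * ψ') / √(1 - k ^ 2 * sin (ψ k) ^ 2))
      k := by
  have hw := one_sub_sq_mul_sin_sq_pos hk (ψ k)
  refine ((((hasDerivAt_pow 2 k).mul (hψ.sin.pow 2)).const_sub 1).sqrt hw.ne').congr_deriv ?_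
  simp only [Pi.mul_apply, Pi.pow_apply]
  field_simp
  ring

lemma hasDerivAt_sin_div_cos_mul_sqrt_sub {k x : ℝ} (hk : k ^ 2 < 1) (hx : cos x ≠ 0) :
    HasDerivAt (fun x => sin x / (cos x * √(1 - k ^ 2 * sin x ^ 2)) - k * ellFDerivModulus k x)
      (1 / (cos x ^ 2 * √(1 - k ^ 2 * sin x ^ 2))) x := by
  have hw := one_sub_sq_mul_sin_sq_pos hk
  have hcont : Continuous fun θ =>
      k * sin θ ^ 2 / ((1 - k ^ 2 * sin θ ^ 2) * √(1 - k ^ 2 * sin θ ^ 2)) :=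
    Continuous.div (by fun_prop) (by fun_prop) fun θ => (mul_pos (hw θ) (sqrt_pos.2 (hw θ))).ne'
  have hJ := (hcont.integral_hasStrictDerivAt 0 x).hasDerivAt
  have hsqrt : HasDerivAt (fun x => √(1 - k ^ 2 * sin x ^ 2))
      (-(k ^ 2 * (2 * sin x * cos x)) / (2 * √(1 - k ^ 2 * sin x ^ 2))) x := by
    have := (((hasDerivAt_sin x).pow 2).const_mul (k ^ 2)).const_sub 1
    simpa using this.sqrt (hw x).ne'
  have hs := sqrt_pos.2 (hw x)
  refine (((hasDerivAt_sin x).div ((hasDerivAt_cos x).mul hsqrt) (mul_ne_zero hx hs.ne')).sub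
    (hJ.const_mul k)).congr_deriv ?_
  have hw0 := (hw x).ne'
  simp only [Pi.mul_apply]
  field_simp
  rw [sq_sqrt (hw x).le]
  field_simp
  linear_combination (1 - k ^ 2 * sin x ^ 2) * sin_sq_add_cos_sq x

theorem mul_ellFDerivModulus_lt {k φ : ℝ} (hk : k ^ 2 < 1) (hφ0 : 0 < φ) (hφ : φ < π / 2) :
    k * ellFDerivModulus k φ < sin φ / (cos φ * √(1 - k ^ 2 * sin φ ^ 2)) := by
  have hcos : ∀ x ∈ Icc 0 φ, 0 < cos x := fun x hx =>
    cos_pos_of_mem_Ioo ⟨by linarith [hx.1, pi_pos], hx.2.trans_lt hφ⟩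
  have hderiv : ∀ x ∈ Icc 0 φ, HasDerivAt
      (fun x => sin x / (cos x * √(1 - k ^ 2 * sin x ^ 2)) - k * ellFDerivModulus k x)
      (1 / (cos x ^ 2 * √(1 - k ^ 2 * sin x ^ 2))) x :=
    fun x hx => hasDerivAt_sin_div_cos_mul_sqrt_sub hk (hcos x hx).ne'
  have hmono := strictMonoOn_of_deriv_pos (convex_Icc 0 φ)
    (fun x hx => (hderiv x hx).continuousAt.continuousWithinAt) fun x hx => by
      rw [interior_Icc] at hx
      rw [(hderiv x (Ioo_subset_Icc_self hx)).deriv]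
      have := hcos x (Ioo_subset_Icc_self hx)
      have := sqrt_pos.2 (one_sub_sq_mul_sin_sq_pos hk x)
      positivity
  have := hmono (left_mem_Icc.2 hφ0.le) (right_mem_Icc.2 hφ0.le) hφ0
  have h0 : ellFDerivModulus k 0 = 0 := integral_same
  simp only [sin_zero, zero_div, h0, mul_zero, sub_zero] at this
  linarith

structure IsJacobiSystem (m : ℝ) (s c d : ℝ → ℝ) : Prop where
  s_zero : s 0 = 0
  c_zero : c 0 = 1
  d_zero : d 0 = 1
  hasDerivAt_s : ∀ u, HasDerivAt s (c u * d u) u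
  hasDerivAt_c : ∀ u, HasDerivAt c (-(s u * d u)) u
  hasDerivAt_d : ∀ u, HasDerivAt d (-(m ^ 2 * s u * c u)) u

noncomputable def amplitude (d : ℝ → ℝ) (u : ℝ) : ℝ := ∫ v in (0:ℝ)..u, d v

lemma amplitude_zero (d : ℝ → ℝ) : amplitude d 0 = 0 := integral_same

noncomputable def jacobiG (m : ℝ) (s c d : ℝ → ℝ) (u : ℝ) : ℝ :=
  (∫ v in (0:ℝ)..u, d v ^ 2) - (1 - m ^ 2) * u - s u * d u / c u

lemma jacobiG_zero {m : ℝ} {s c d : ℝ → ℝ} (hs : s 0 = 0) : jacobiG m s c d 0 = 0 := by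
  simp [jacobiG, hs]

namespace IsJacobiSystem

variable {m : ℝ} {s c d : ℝ → ℝ} (h : IsJacobiSystem m s c d)
include h

lemma continuous_d : Continuous d :=
  continuous_iff_continuousAt.2 fun u => (h.hasDerivAt_d u).continuousAt

lemma hasDerivAt_amplitude (u : ℝ) : HasDerivAt (amplitude d) (d u) u :=
  (h.continuous_d.integral_hasStrictDerivAt 0 u).hasDerivAt

/-- `(s, c)` and `(sin am, cos am)` solve the same linear system `x' = d y, y' = -d x`, so their
squared distance is constant. -/
lemma s_eq_sin_and_c_eq_cos (u : ℝ) : s u = sin (amplitude d u) ∧ c u = cos (amplitude d u) := by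
  have hW : ∀ x, HasDerivAt
      (fun x => (s x - sin (amplitude d x)) ^ 2 + (c x - cos (amplitude d x)) ^ 2) 0 x := by
    intro x
    have hs := (h.hasDerivAt_s x).sub (h.hasDerivAt_amplitude x).sin
    have hc := (h.hasDerivAt_c x).sub (h.hasDerivAt_amplitude x).cos
    exact ((hs.pow 2).add (hc.pow 2)).congr_deriv (by simp only [Pi.sub_apply]; ring)
  have hconst := is_const_of_deriv_eq_zero (fun x => (hW x).differentiableAt)
    (fun x => (hW x).deriv) u 0
  simp only [h.s_zero, h.c_zero, amplitude_zero, sin_zero, cos_zero, sub_self] at hconst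
  constructor <;>
    nlinarith [sq_nonneg (s u - sin (amplitude d u)), sq_nonneg (c u - cos (amplitude d u))]

lemma s_eq_sin (u : ℝ) : s u = sin (amplitude d u) := (h.s_eq_sin_and_c_eq_cos u).1

lemma c_eq_cos (u : ℝ) : c u = cos (amplitude d u) := (h.s_eq_sin_and_c_eq_cos u).2

lemma sq_s_add_sq_c (u : ℝ) : s u ^ 2 + c u ^ 2 = 1 := by
  rw [h.s_eq_sin, h.c_eq_cos, sin_sq_add_cos_sq]

lemma sq_d (u : ℝ) : d u ^ 2 = 1 - m ^ 2 * s u ^ 2 := by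
  have hW : ∀ x, HasDerivAt (fun x => d x ^ 2 + m ^ 2 * s x ^ 2) 0 x := fun x =>
    (((h.hasDerivAt_d x).pow 2).add (((h.hasDerivAt_s x).pow 2).const_mul (m ^ 2))).congr_deriv
      (by ring)
  have hconst := is_const_of_deriv_eq_zero (fun x => (hW x).differentiableAt)
    (fun x => (hW x).deriv) u 0
  simp only [h.s_zero, h.d_zero] at hconst
  linarith

lemma d_pos (hm : m ^ 2 < 1) (u : ℝ) : 0 < d u := by
  have hne : ∀ x, d x ≠ 0 := fun x hx => by
    have := h.sq_d x
    rw [hx, h.s_eq_sin] at this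
    linarith [one_sub_sq_mul_sin_sq_pos hm (amplitude d x)]
  by_contra! hu
  obtain ⟨x, -, hx⟩ := intermediate_value_uIcc (a := u) (b := 0) h.continuous_d.continuousOn
    (by rw [h.d_zero, mem_uIcc]; exact Or.inl ⟨hu, zero_le_one⟩)
  exact hne x hx

lemma d_eq_sqrt (hm : m ^ 2 < 1) (u : ℝ) : d u = √(1 - m ^ 2 * sin (amplitude d u) ^ 2) := by
  rw [← h.s_eq_sin, ← h.sq_d, sqrt_sq (h.d_pos hm u).le]

lemma ellF_amplitude (hm : m ^ 2 < 1) (u : ℝ) : ellF m (amplitude d u) = u := by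
  have hW : ∀ x, HasDerivAt (fun x => ellF m (amplitude d x) - x) 0 x := fun x => by
    refine (((hasDerivAt_ellF hm _).comp x (h.hasDerivAt_amplitude x)).sub
      (hasDerivAt_id x)).congr_deriv ?_
    rw [← h.d_eq_sqrt hm, one_div_mul_cancel (h.d_pos hm x).ne', sub_self]
  have hconst := is_const_of_deriv_eq_zero (fun x => (hW x).differentiableAt)
    (fun x => (hW x).deriv) u 0
  simp only [amplitude_zero, ellF_zero, sub_zero] at hconst
  linarith

lemma amplitude_nonneg (hm : m ^ 2 < 1) {u : ℝ} (hu : 0 ≤ u) : 0 ≤ amplitude d u := by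
  rwa [← (strictMono_ellF hm).le_iff_le, h.ellF_amplitude hm, ellF_zero]

lemma amplitude_pos (hm : m ^ 2 < 1) {u : ℝ} (hu : 0 < u) : 0 < amplitude d u := by
  rwa [← (strictMono_ellF hm).lt_iff_lt, h.ellF_amplitude hm, ellF_zero]

lemma amplitude_lt_pi_div_two (hm : m ^ 2 < 1) {u : ℝ} (hu : u < ellK m) :
    amplitude d u < π / 2 := by
  rwa [← (strictMono_ellF hm).lt_iff_lt, h.ellF_amplitude hm]

lemma c_pos (hm : m ^ 2 < 1) {u : ℝ} (hu0 : 0 ≤ u) (hu : u < ellK m) : 0 < c u := by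
  rw [h.c_eq_cos]
  exact cos_pos_of_mem_Ioo ⟨by linarith [pi_pos, h.amplitude_nonneg hm hu0],
    h.amplitude_lt_pi_div_two hm hu⟩

lemma s_pos (hm : m ^ 2 < 1) {u : ℝ} (hu0 : 0 < u) (hu : u < ellK m) : 0 < s u := by
  rw [h.s_eq_sin]
  exact sin_pos_of_pos_of_lt_pi (h.amplitude_pos hm hu0)
    ((h.amplitude_lt_pi_div_two hm hu).trans (by linarith [pi_pos]))

lemma sqrt_one_sub_sq_d_div (hm0 : 0 < m) (hm : m ^ 2 < 1) {u : ℝ} (hu0 : 0 < u)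
    (hu : u < ellK m) : √(1 - d u ^ 2) / m = s u := by
  rw [h.sq_d, show 1 - (1 - m ^ 2 * s u ^ 2) = (m * s u) ^ 2 by ring,
    sqrt_sq (mul_pos hm0 (h.s_pos hm hu0 hu)).le, mul_div_cancel_left₀ _ hm0.ne']

lemma amplitude_eq_arcsin (hm0 : 0 < m) (hm : m ^ 2 < 1) {u : ℝ} (hu0 : 0 < u)
    (hu : u < ellK m) : amplitude d u = arcsin (√(1 - d u ^ 2) / m) := by
  rw [h.sqrt_one_sub_sq_d_div hm0 hm hu0 hu, h.s_eq_sin, arcsin_sin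
    (by linarith [pi_pos, h.amplitude_pos hm hu0]) (h.amplitude_lt_pi_div_two hm hu).le]

lemma hasDerivAt_jacobiG {u : ℝ} (hc : c u ≠ 0) :
    HasDerivAt (jacobiG m s c d) (-(1 - m ^ 2) / c u ^ 2) u := by
  have hE : HasDerivAt (fun u => ∫ v in (0:ℝ)..u, d v ^ 2) (d u ^ 2) u :=
    ((h.continuous_d.pow 2).integral_hasStrictDerivAt 0 u).hasDerivAt
  refine ((hE.sub ((hasDerivAt_id u).const_mul (1 - m ^ 2))).sub
    (((h.hasDerivAt_s u).mul (h.hasDerivAt_d u)).div (h.hasDerivAt_c u) hc)).congr_deriv ?_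
  have hsc := h.sq_s_add_sq_c u
  have hd := h.sq_d u
  simp only [Pi.mul_apply]
  field_simp
  linear_combination (-s u ^ 2) * hd + (m ^ 2 * s u ^ 2 - (1 - m ^ 2)) * hsc

theorem jacobiG_neg (hm : m ^ 2 < 1) {u : ℝ} (hu0 : 0 < u) (hu : u < ellK m) :
    jacobiG m s c d u < 0 := by
  have hc : ∀ x ∈ Icc 0 u, 0 < c x := fun x hx => h.c_pos hm hx.1 (hx.2.trans_lt hu)
  have hanti : StrictAntiOn (jacobiG m s c d) (Icc 0 u) :=
    strictAntiOn_of_deriv_neg (convex_Icc 0 u)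
      (fun x hx => (h.hasDerivAt_jacobiG (hc x hx).ne').continuousAt.continuousWithinAt)
      fun x hx => by
        rw [interior_Icc] at hx
        have hcx := hc x (Ioo_subset_Icc_self hx)
        rw [(h.hasDerivAt_jacobiG hcx.ne').deriv, neg_div, neg_lt_zero]
        exact div_pos (by linarith) (by positivity)
  simpa [jacobiG_zero h.s_zero] using hanti (left_mem_Icc.2 hu0.le) (right_mem_Icc.2 hu0.le) hu0

end IsJacobiSystem

lemma continuousAt_ellK {k : ℝ} (hk : k ^ 2 < 1) : ContinuousAt ellK k :=
  (hasDerivAt_ellF_comp hk (hasDerivAt_const k (π / 2))).continuousAt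

lemma eventually_mem_Ioo_and_lt_ellK {k u : ℝ} (hk0 : 0 < k) (hk1 : k < 1) (hu : u < ellK k) :
    ∀ᶠ m in 𝓝 k, m ∈ Ioo (0:ℝ) 1 ∧ u < ellK m :=
  Filter.Eventually.and (Ioo_mem_nhds hk0 hk1)
    ((continuousAt_ellK (pow_lt_one₀ hk0.le hk1 two_ne_zero)).eventually (lt_mem_nhds hu))

section Modulus

variable {sn cn dn : ℝ → ℝ → ℝ}
  (hsys : ∀ m ∈ Ioo (0:ℝ) 1, IsJacobiSystem m (sn · m) (cn · m) (dn · m))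
  {k u : ℝ} (hk0 : 0 < k) (hk1 : k < 1) (hu0 : 0 < u) (hu : u < ellK k)
include hsys hk0 hk1 hu0 hu

lemma differentiableAt_amplitude_modulus (hD : DifferentiableAt ℝ (dn u ·) k) :
    DifferentiableAt ℝ (fun m => amplitude (dn · m) u) k := by
  have hk := pow_lt_one₀ hk0.le hk1 two_ne_zero
  have hsys_k := hsys k ⟨hk0, hk1⟩
  have hs := hsys_k.s_pos hk hu0 hu
  have hsne : √(1 - dn u k ^ 2) / k ≠ -1 ∧ √(1 - dn u k ^ 2) / k ≠ 1 := by
    rw [hsys_k.sqrt_one_sub_sq_d_div hk0 hk hu0 hu]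
    have := hsys_k.sq_s_add_sq_c u
    have := hsys_k.c_pos hk hu0.le hu
    constructor <;> nlinarith
  have hsqrt : 1 - dn u k ^ 2 ≠ 0 := by
    rw [hsys_k.sq_d, sub_sub_cancel]
    exact (mul_pos (pow_pos hk0 2) (pow_pos hs 2)).ne'
  refine DifferentiableAt.congr_of_eventuallyEq ?_
    (eventually_mem_Ioo_and_lt_ellK hk0 hk1 hu |>.mono fun m hm =>
      (hsys m hm.1).amplitude_eq_arcsin hm.1.1 (pow_lt_one₀ hm.1.1.le hm.1.2 two_ne_zero) hu0 hm.2)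
  exact (differentiableAt_arcsin.2 hsne).comp (f := fun m => √(1 - dn u m ^ 2) / m) k
    (((hD.pow 2).const_sub 1).sqrt hsqrt |>.div differentiableAt_id hk0.ne')

theorem neg_of_hasDerivAt_modulus {D : ℝ} (hD : HasDerivAt (dn u ·) D k) : D < 0 := by
  have hk := pow_lt_one₀ hk0.le hk1 two_ne_zero
  have hsys_k := hsys k ⟨hk0, hk1⟩
  have hnear := eventually_mem_Ioo_and_lt_ellK hk0 hk1 hu
  have hsq : ∀ m ∈ Ioo (0:ℝ) 1, m ^ 2 < 1 := fun m hm => pow_lt_one₀ hm.1.le hm.2 two_ne_zero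
  set φ : ℝ → ℝ := fun m => amplitude (dn · m) u
  have hφ : HasDerivAt φ (deriv φ k) k :=
    (differentiableAt_amplitude_modulus hsys hk0 hk1 hu0 hu hD.differentiableAt).hasDerivAt
  have hdn_eq : (dn u ·) =ᶠ[𝓝 k] fun m => √(1 - m ^ 2 * sin (φ m) ^ 2) :=
    hnear.mono fun m hm => (hsys m hm.1).d_eq_sqrt (hsq m hm.1) u
  have hF_eq : (fun _ => u) =ᶠ[𝓝 k] fun m => ellF m (φ m) :=
    hnear.mono fun m hm => ((hsys m hm.1).ellF_amplitude (hsq m hm.1) u).symm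
  have hD_eq := hD.unique
    ((hasDerivAt_sqrt_one_sub_sq_mul_sin_sq_comp hk hφ).congr_of_eventuallyEq hdn_eq)
  have hzero := (hasDerivAt_const k u).unique
    ((hasDerivAt_ellF_comp hk hφ).congr_of_eventuallyEq hF_eq)
  have hlt := mul_ellFDerivModulus_lt (φ := φ k) hk (hsys_k.amplitude_pos hk hu0)
    (hsys_k.amplitude_lt_pi_div_two hk hu)
  rw [← hsys_k.d_eq_sqrt hk, ← hsys_k.s_eq_sin, ← hsys_k.c_eq_cos] at hD_eq hlt
  rw [← hsys_k.d_eq_sqrt hk] at hzero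
  set J := ellFDerivModulus k (φ k)
  have hd := hsys_k.d_pos hk u
  have hφ' : deriv φ k = -(J * dn u k) := by
    field_simp at hzero
    linarith
  have hJ : k * J * (cn u k * dn u k) < sn u k :=
    (lt_div_iff₀ (mul_pos (hsys_k.c_pos hk hu0.le hu) hd)).1 hlt
  have hDd : D * dn u k = k * sn u k * (k * J * (cn u k * dn u k) - sn u k) := by
    rw [hD_eq, hφ']
    field_simp
    ring
  exact neg_of_mul_neg_left
    (hDd ▸ mul_neg_of_pos_of_neg (mul_pos hk0 (hsys_k.s_pos hk hu0 hu)) (sub_neg.2 hJ)) hd.le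

end Modulus

theorem dn_strictAnti_in_modulus (sn cn dn : ℝ → ℝ → ℝ)
    (hjac : ∀ m ∈ Set.Ioo (0:ℝ) 1,
      sn 0 m = 0 ∧ cn 0 m = 1 ∧ dn 0 m = 1 ∧
      ∀ u : ℝ, HasDerivAt (fun v => sn v m) (cn u m * dn u m) u ∧
        HasDerivAt (fun v => cn v m) (-(sn u m * dn u m)) u ∧
        HasDerivAt (fun v => dn v m) (-(m^2 * sn u m * cn u m)) u)
    (k : ℝ) (hk0 : 0 < k) (hk1 : k < 1)
    (u : ℝ) (hu0 : 0 < u) (hu : u < ellK k) :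
    ((∫ v in (0:ℝ)..u, (dn v k)^2) - (1 - k^2) * u
        - sn u k * dn u k / cn u k < 0) ∧
    ∀ D : ℝ, HasDerivAt (fun m => dn u m) D k → D < 0 := by
  have hsys : ∀ m ∈ Ioo (0:ℝ) 1, IsJacobiSystem m (sn · m) (cn · m) (dn · m) := fun m hm =>
    let ⟨hs, hc, hd, hderiv⟩ := hjac m hm
    ⟨hs, hc, hd, fun u => (hderiv u).1, fun u => (hderiv u).2.1, fun u => (hderiv u).2.2⟩
  exact ⟨(hsys k ⟨hk0, hk1⟩).jacobiG_neg (pow_lt_one₀ hk0.le hk1 two_ne_zero) hu0 hu,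
    fun D hD => neg_of_hasDerivAt_modulus hsys hk0 hk1 hu0 hu hD⟩
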